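/- Let X be a Hilbert lattice and let (yⁿ) be a sequence in X such that 0 ≤ yⁿ and yⁿ ≤ yⁿ⁺¹ for every n, and sup_n ‖yⁿ‖ < ∞. Then (yⁿ) converges in norm. -/

import Mathlib

open Filter

lemma inner_nonneg_of_nonneg
    {X : Type*} [NormedAddCommGroup X] [Lattice X] [IsOrderedAddMonoid X] [HasSolidNorm X]
    [InnerProductSpace ℝ X]
    {a b : X} (ha : 0 ≤ a) (hb : 0 ≤ b) : 0 ≤ (inner ℝ a b : ℝ) := by
  have hstep : |a - b| ≤ |a| + |b| := by
    rw [sub_eq_add_neg]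
    exact (abs_add_le a (-b)).trans_eq (by rw [abs_neg])
  have habs : |a - b| ≤ |a + b| := by
    calc |a - b| ≤ |a| + |b| := hstep
      _ = a + b := by rw [abs_of_nonneg ha, abs_of_nonneg hb]
      _ = |a + b| := (abs_of_nonneg (add_nonneg ha hb)).symm
  have hn : ‖a - b‖ ≤ ‖a + b‖ := norm_le_norm_of_abs_le_abs habs
  have hsq : ‖a - b‖ * ‖a - b‖ ≤ ‖a + b‖ * ‖a + b‖ :=
    mul_self_le_mul_self (norm_nonneg _) hn
  have h1 := real_inner_eq_norm_add_mul_self_sub_norm_mul_self_sub_norm_mul_self_div_two a b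
  have h2 := real_inner_eq_norm_mul_self_add_norm_mul_self_sub_norm_sub_mul_self_div_two a b
  linarith

/-- In a Hilbert lattice, a nonnegative increasing norm-bounded sequence
converges in norm. -/
theorem hilbert_lattice_increasing_bounded_converges
    {X : Type*} [NormedAddCommGroup X] [Lattice X] [IsOrderedAddMonoid X] [HasSolidNorm X]
    [InnerProductSpace ℝ X] [CompleteSpace X]
    [PosSMulStrictMono ℝ X] [PosSMulReflectLT ℝ X]
    (y : ℕ → X)
    (hpos : ∀ n : ℕ, 0 ≤ y n)
    (hinc : ∀ n : ℕ, y n ≤ y (n + 1))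
    (hbd : ∃ C : ℝ, ∀ n : ℕ, ‖y n‖ ≤ C) :
    ∃ z : X, Tendsto y atTop (nhds z) := by
  obtain ⟨C, hC⟩ := hbd
  have hmono : Monotone y := monotone_nat_of_le_succ hinc
  set f : ℕ → ℝ := fun n => ‖y n‖ ^ 2 with hf
  have hfmono : Monotone f := by
    intro m n hmn
    have h1 : |y m| ≤ |y n| := by
      rw [abs_of_nonneg (hpos m), abs_of_nonneg (hpos n)]; exact hmono hmn
    have := norm_le_norm_of_abs_le_abs h1
    exact pow_le_pow_left₀ (norm_nonneg _) this 2
  have hfbdd : BddAbove (Set.range f) := by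
    refine ⟨(max C 0) ^ 2, ?_⟩
    rintro x ⟨n, rfl⟩
    exact pow_le_pow_left₀ (norm_nonneg _) ((hC n).trans (le_max_left _ _)) 2
  have hfconv : Tendsto f atTop (nhds (⨆ n, f n)) :=
    tendsto_atTop_ciSup hfmono hfbdd
  have hfcauchy : CauchySeq f := hfconv.cauchySeq
  -- key inequality
  have key : ∀ m n : ℕ, m ≤ n → ‖y n - y m‖ ^ 2 ≤ f n - f m := by
    intro m n hmn
    have hd : 0 ≤ y n - y m := sub_nonneg.mpr (hmono hmn)
    have hin : 0 ≤ (inner ℝ (y n - y m) (y m) : ℝ) :=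
      inner_nonneg_of_nonneg hd (hpos m)
    have hexp : ‖(y n - y m) + y m‖ ^ 2
        = ‖y n - y m‖ ^ 2 + 2 * (inner ℝ (y n - y m) (y m) : ℝ) + ‖y m‖ ^ 2 :=
      norm_add_sq_real _ _
    have : (y n - y m) + y m = y n := by abel
    rw [this] at hexp
    simp only [hf]
    linarith
  have hcauchy : CauchySeq y := by
    rw [Metric.cauchySeq_iff]
    intro ε hε
    obtain ⟨N, hN⟩ := Metric.cauchySeq_iff.mp hfcauchy (ε ^ 2) (pow_pos hε 2)
    refine ⟨N, fun m hm n hn => ?_⟩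
    wlog hmn : n ≤ m generalizing m n
    · rw [dist_comm]; exact this n hn m hm (le_of_not_ge hmn)
    have hkey := key n m hmn
    have hdist : dist (f m) (f n) < ε ^ 2 := hN m hm n hn
    have : ‖y m - y n‖ ^ 2 < ε ^ 2 := by
      calc ‖y m - y n‖ ^ 2 ≤ f m - f n := hkey
      _ ≤ |f m - f n| := le_abs_self _
      _ < ε ^ 2 := by rwa [Real.dist_eq] at hdist
    rw [dist_eq_norm]
    nlinarith [norm_nonneg (y m - y n)]
  exact cauchySeq_tendsto_of_complete hcauchy
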